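/- The solution operator S: L^∞(0,T;ℝ^{n×n}×ℝⁿ)→C([0,T];ℝⁿ), (a,ℓ)↦y, of the state equation is locally Lipschitz continuous: for every M>0 there exists a constant L_M>0 such that ‖S(a₁,ℓ₁)−S(a₂,ℓ₂)‖_{C([0,T];ℝⁿ)} ≤ L_M (‖a₁−a₂‖_{L^∞(0,T;ℝ^{n×n})}+‖ℓ₁−ℓ₂‖_{L^∞(0,T;ℝⁿ)}) for all (a₁,ℓ₁),(a₂,ℓ₂) with ‖(aₖ,ℓₖ)‖_{L^∞(0,T;ℝ^{n×n}×ℝⁿ)} ≤ M, k=1,2. -/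

import Mathlib

/-!
Everything rests on the singular Gronwall inequality
`φ t ≤ A + C ∫₀ᵗ (t - s) ^ (γ - 1) φ s ds  ⟹  φ t ≤ 2 A e^{r t}`,
proved with the weighted norm `sup_s e^{-r s} φ(s)`: since
`∫₀ᵗ (t - s) ^ (γ - 1) e^{r s} ds ≤ Γ(γ) r^{-γ} e^{r t}`, taking `r ^ γ ≥ 2 C Γ(γ)` makes the
integral term at most half of the weighted norm. With `‖aₖ‖, ‖ℓₖ‖ ≤ M` this first bounds
`‖y₂‖` by a constant `B` depending only on `M`; then `a₁ y₁ - a₂ y₂ = a₁ (y₁ - y₂) + (a₁ - a₂) y₂`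
shows that `‖y₁ - y₂‖` satisfies the same inequality with inhomogeneity `L (Ca B + Cl)`.
-/

open MeasureTheory Set Filter Topology

noncomputable section

/-- `ℝⁿ` with the Euclidean norm. -/
abbrev Vec (n : ℕ) := EuclideanSpace ℝ (Fin n)

/-- `ℝ^{n×n}` with the Frobenius (Euclidean) norm. -/
abbrev Mat (n : ℕ) := EuclideanSpace ℝ ((Fin n) × (Fin n))

/-- Matrix-vector multiplication `A * x`. -/
def mv {n : ℕ} (A : Mat n) (x : Vec n) : Vec n :=
  (WithLp.equiv 2 (Fin n → ℝ)).symm (fun i => ∑ j, A (i, j) * x j)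

/-- `y ∈ C([0,T];ℝⁿ)` is a mild solution of the state equation
`∂^γ y = f(a y + ℓ)`, `y(0) = y₀`, i.e. it satisfies the Volterra integral equation
`y(t) = y₀ + ∫₀ᵗ ((t-s)^(γ-1)/Γ(γ)) f(a(s) y(s) + ℓ(s)) ds` for all `t ∈ [0,T]`. -/
def IsMildSolution {n : ℕ} (γ T : ℝ) (y₀ : Vec n) (f : Vec n → Vec n)
    (a : ℝ → Mat n) (ℓ : ℝ → Vec n) (y : ℝ → Vec n) : Prop :=
  ContinuousOn y (Icc 0 T) ∧
  ∀ t ∈ Icc (0:ℝ) T,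
    y t = y₀ + ∫ s in (0:ℝ)..t, ((t - s) ^ (γ - 1) / Real.Gamma γ) • f (mv (a s) (y s) + ℓ s)

section RpowKernel

variable {γ : ℝ}

lemma intervalIntegrable_sub_rpow (hγ : 0 < γ) (t c d : ℝ) :
    IntervalIntegrable (fun s => (t - s) ^ (γ - 1)) volume c d := by
  simpa using (intervalIntegral.intervalIntegrable_rpow' (a := t - c) (b := t - d)
    (r := γ - 1) (by linarith)).comp_sub_left t

lemma intervalIntegrable_sub_rpow_mul (hγ : 0 < γ) {t : ℝ} (ht : 0 ≤ t) {φ : ℝ → ℝ}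
    (hφ : ContinuousOn φ (Icc 0 t)) :
    IntervalIntegrable (fun s => (t - s) ^ (γ - 1) * φ s) volume 0 t :=
  (intervalIntegrable_sub_rpow hγ t 0 t).mul_continuousOn (by rwa [uIcc_of_le ht])

lemma integral_sub_rpow (hγ : 0 < γ) (t : ℝ) :
    ∫ s in (0:ℝ)..t, (t - s) ^ (γ - 1) = t ^ γ / γ := by
  rw [intervalIntegral.integral_comp_sub_left (fun x => x ^ (γ - 1)) t,
    integral_rpow (Or.inl (by linarith))]
  simp [Real.zero_rpow hγ.ne']

lemma integral_sub_rpow_mul_exp_le (hγ : 0 < γ) {r t : ℝ} (hr : 0 < r) (ht : 0 ≤ t) :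
    ∫ s in (0:ℝ)..t, (t - s) ^ (γ - 1) * Real.exp (r * s)
      ≤ Real.Gamma γ / r ^ γ * Real.exp (r * t) := by
  have hint : IntegrableOn (fun u : ℝ => u ^ (γ - 1) * Real.exp (-(r * u))) (Ioi 0) := by
    simpa using integrableOn_rpow_mul_exp_neg_mul_rpow (p := 1) (by linarith) one_pos hr
  have hnonneg : 0 ≤ᵐ[volume.restrict (Ioi 0)] fun u : ℝ => u ^ (γ - 1) * Real.exp (-(r * u)) :=
    (ae_restrict_iff' measurableSet_Ioi).mpr <| .of_forall fun u hu =>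
      mul_nonneg (Real.rpow_nonneg (le_of_lt hu) _) (Real.exp_pos _).le
  calc ∫ s in (0:ℝ)..t, (t - s) ^ (γ - 1) * Real.exp (r * s)
      = Real.exp (r * t) * ∫ u in (0:ℝ)..t, u ^ (γ - 1) * Real.exp (-(r * u)) := by
        have hsub := intervalIntegral.integral_comp_sub_left
          (fun u => u ^ (γ - 1) * Real.exp (r * (t - u))) t (a := 0) (b := t)
        simp only [sub_sub_cancel, sub_self, sub_zero] at hsub
        rw [hsub, ← intervalIntegral.integral_const_mul]
        congr 1 with u
        rw [mul_sub, Real.exp_sub, div_eq_mul_inv, ← Real.exp_neg]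
        ring
    _ ≤ Real.exp (r * t) * ∫ u in Ioi 0, u ^ (γ - 1) * Real.exp (-(r * u)) := by
        rw [intervalIntegral.integral_of_le ht]
        exact mul_le_mul_of_nonneg_left
          (setIntegral_mono_set hint hnonneg Ioc_subset_Ioi_self.eventuallyLE) (Real.exp_pos _).le
    _ = Real.Gamma γ / r ^ γ * Real.exp (r * t) := by
        rw [Real.integral_rpow_mul_exp_neg_mul_Ioi hγ hr, one_div, Real.inv_rpow hr.le]
        ring

lemma sub_rpow_div_Gamma_nonneg (hγ : 0 < γ) {t s : ℝ} (hs : s ≤ t) :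
    0 ≤ (t - s) ^ (γ - 1) / Real.Gamma γ :=
  div_nonneg (Real.rpow_nonneg (sub_nonneg.mpr hs) _) (Real.Gamma_pos_of_pos hγ).le

lemma intervalIntegrable_sub_rpow_div_smul {E : Type*} [NormedAddCommGroup E] [NormedSpace ℝ E]
    (hγ : 0 < γ) {t : ℝ} (ht : 0 ≤ t) {g : ℝ → E}
    (hg : AEStronglyMeasurable g (volume.restrict (Ioc 0 t))) {ψ : ℝ → ℝ}
    (hψ : ContinuousOn ψ (Icc 0 t)) (hgψ : ∀ s ∈ Ioc 0 t, ‖g s‖ ≤ ψ s) :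
    IntervalIntegrable (fun s => ((t - s) ^ (γ - 1) / Real.Gamma γ) • g s) volume 0 t := by
  rw [← uIcc_of_le ht] at hψ
  refine ((intervalIntegrable_sub_rpow hγ t 0 t).mul_continuousOn
    (hψ.div_const (Real.Gamma γ))).mono_fun' ?_ ?_ <;> rw [uIoc_of_le ht]
  · exact ((by fun_prop : Measurable fun s => (t - s) ^ (γ - 1) / Real.Gamma γ)
      |>.aestronglyMeasurable).smul hg
  · filter_upwards [ae_restrict_mem measurableSet_Ioc] with s hs
    have hk := sub_rpow_div_Gamma_nonneg hγ hs.2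
    calc ‖((t - s) ^ (γ - 1) / Real.Gamma γ) • g s‖
        ≤ (t - s) ^ (γ - 1) / Real.Gamma γ * ψ s := by
          rw [norm_smul, Real.norm_of_nonneg hk]
          exact mul_le_mul_of_nonneg_left (hgψ s hs) hk
      _ = (t - s) ^ (γ - 1) * (ψ s / Real.Gamma γ) := by ring

lemma norm_integral_sub_rpow_div_smul_le {E : Type*} [NormedAddCommGroup E] [NormedSpace ℝ E]
    (hγ : 0 < γ) {t : ℝ} (ht : 0 ≤ t) {g : ℝ → E} {φ : ℝ → ℝ} (hφ : ContinuousOn φ (Icc 0 t))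
    {B C : ℝ} (hg : ∀ s ∈ Ioc 0 t, ‖g s‖ ≤ B + C * φ s) :
    ‖∫ s in (0:ℝ)..t, ((t - s) ^ (γ - 1) / Real.Gamma γ) • g s‖
      ≤ ∫ s in (0:ℝ)..t, (t - s) ^ (γ - 1) * (B / Real.Gamma γ + C / Real.Gamma γ * φ s) := by
  refine intervalIntegral.norm_integral_le_of_norm_le ht (.of_forall fun s hs => ?_)
    (intervalIntegrable_sub_rpow_mul hγ ht (by fun_prop))
  have hk := sub_rpow_div_Gamma_nonneg hγ hs.2
  calc ‖((t - s) ^ (γ - 1) / Real.Gamma γ) • g s‖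
      ≤ (t - s) ^ (γ - 1) / Real.Gamma γ * (B + C * φ s) := by
        rw [norm_smul, Real.norm_of_nonneg hk]
        exact mul_le_mul_of_nonneg_left (hg s hs) hk
    _ = (t - s) ^ (γ - 1) * (B / Real.Gamma γ + C / Real.Gamma γ * φ s) := by ring

end RpowKernel

section Gronwall

variable {γ : ℝ}

theorem singular_gronwall (hγ : 0 < γ) {T A C r : ℝ} (hA : 0 ≤ A) (hC : 0 ≤ C) (hr : 0 < r)
    (hCr : 2 * C * Real.Gamma γ ≤ r ^ γ) {φ : ℝ → ℝ} (hφ : ContinuousOn φ (Icc 0 T))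
    (hφle : ∀ t ∈ Icc 0 T, φ t ≤ A + C * ∫ s in (0:ℝ)..t, (t - s) ^ (γ - 1) * φ s) :
    ∀ t ∈ Icc 0 T, φ t ≤ 2 * A * Real.exp (r * t) := by
  intro t ht
  have hψ : ContinuousOn (fun s => φ s * Real.exp (-(r * s))) (Icc 0 T) :=
    hφ.mul (by fun_prop)
  obtain ⟨τ, hτ, hmax⟩ := isCompact_Icc.exists_isMaxOn ⟨t, ht⟩ hψ
  set m := φ τ * Real.exp (-(r * τ))
  have hφm : ∀ s ∈ Icc 0 T, φ s ≤ m * Real.exp (r * s) := fun s hs => by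
    have := mul_le_mul_of_nonneg_right (hmax hs) (Real.exp_pos (r * s)).le
    rwa [mul_assoc, ← Real.exp_add, neg_add_cancel, Real.exp_zero, mul_one] at this
  suffices hm : m ≤ 2 * A from (hφm t ht).trans (by gcongr)
  rcases le_or_gt m 0 with hm0 | hm0
  · linarith
  have hτ0 := hτ.1
  have hΓr : C * (Real.Gamma γ / r ^ γ) ≤ 1 / 2 := by
    rw [← mul_div_assoc, div_le_iff₀ (by positivity)]
    linarith
  have hint : ∫ s in (0:ℝ)..τ, (τ - s) ^ (γ - 1) * φ s
      ≤ m * (Real.Gamma γ / r ^ γ * Real.exp (r * τ)) :=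
    calc ∫ s in (0:ℝ)..τ, (τ - s) ^ (γ - 1) * φ s
        ≤ ∫ s in (0:ℝ)..τ, (τ - s) ^ (γ - 1) * (m * Real.exp (r * s)) := by
          refine intervalIntegral.integral_mono_on hτ0
            (intervalIntegrable_sub_rpow_mul hγ hτ0 (hφ.mono (Icc_subset_Icc_right hτ.2)))
            (intervalIntegrable_sub_rpow_mul hγ hτ0 (by fun_prop)) fun s hs => ?_
          exact mul_le_mul_of_nonneg_left (hφm s ⟨hs.1, hs.2.trans hτ.2⟩)
            (Real.rpow_nonneg (sub_nonneg.mpr hs.2) _)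
      _ = m * ∫ s in (0:ℝ)..τ, (τ - s) ^ (γ - 1) * Real.exp (r * s) := by
          rw [← intervalIntegral.integral_const_mul]
          congr 1 with s
          ring
      _ ≤ m * (Real.Gamma γ / r ^ γ * Real.exp (r * τ)) :=
          mul_le_mul_of_nonneg_left (integral_sub_rpow_mul_exp_le hγ hr hτ0) hm0.le
  have hτeq : φ τ = m * Real.exp (r * τ) := by
    simp [m, mul_assoc, ← Real.exp_add]
  have hexp : 1 ≤ Real.exp (r * τ) := Real.one_le_exp (by positivity)
  -- `m e^{rτ} = φ τ ≤ A + m e^{rτ} / 2`, so `m ≤ m e^{rτ} ≤ 2 A`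
  have := hφle τ hτ
  nlinarith [mul_le_mul_of_nonneg_left hint hC, mul_le_mul_of_nonneg_right hΓr
    (mul_nonneg hm0.le (Real.exp_pos (r * τ)).le)]

theorem singular_gronwall_affine (hγ : 0 < γ) {T A B C r : ℝ} (hA : 0 ≤ A) (hB : 0 ≤ B)
    (hC : 0 ≤ C) (hr : 0 < r) (hCr : 2 * C * Real.Gamma γ ≤ r ^ γ) {φ : ℝ → ℝ}
    (hφ : ContinuousOn φ (Icc 0 T))
    (hφle : ∀ t ∈ Icc 0 T, φ t ≤ A + ∫ s in (0:ℝ)..t, (t - s) ^ (γ - 1) * (B + C * φ s)) :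
    ∀ t ∈ Icc 0 T, φ t ≤ 2 * (A + B * T ^ γ / γ) * Real.exp (r * T) := by
  intro t ht
  have hT : 0 ≤ T := ht.1.trans ht.2
  have hA' : 0 ≤ A + B * T ^ γ / γ := by positivity
  have hlin : ∀ t ∈ Icc 0 T,
      φ t ≤ (A + B * T ^ γ / γ) + C * ∫ s in (0:ℝ)..t, (t - s) ^ (γ - 1) * φ s := by
    intro t ⟨ht0, htT⟩
    have hsplit : ∫ s in (0:ℝ)..t, (t - s) ^ (γ - 1) * (B + C * φ s)
        = B * (t ^ γ / γ) + C * ∫ s in (0:ℝ)..t, (t - s) ^ (γ - 1) * φ s := by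
      simp_rw [mul_add, mul_left_comm _ C]
      have hφt := hφ.mono (Icc_subset_Icc_right htT)
      rw [intervalIntegral.integral_add ((intervalIntegrable_sub_rpow hγ t 0 t).mul_const B)
          ((intervalIntegrable_sub_rpow_mul hγ ht0 hφt).const_mul C),
        intervalIntegral.integral_mul_const, intervalIntegral.integral_const_mul,
        integral_sub_rpow hγ, mul_comm]
    have htγ : t ^ γ ≤ T ^ γ := Real.rpow_le_rpow ht0 htT hγ.le
    have := hφle t ⟨ht0, htT⟩
    rw [hsplit] at this
    have : B * (t ^ γ / γ) ≤ B * T ^ γ / γ := by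
      rw [mul_div_assoc]; gcongr
    linarith
  calc φ t ≤ 2 * (A + B * T ^ γ / γ) * Real.exp (r * t) :=
        singular_gronwall hγ hA' hC hr hCr hφ hlin t ht
    _ ≤ 2 * (A + B * T ^ γ / γ) * Real.exp (r * T) := by
        gcongr
        exact ht.2

end Gronwall

section MatVec

variable {n : ℕ}

lemma mv_apply (A : Mat n) (x : Vec n) (i : Fin n) : mv A x i = ∑ j, A (i, j) * x j := rfl

lemma mv_sub_mv (A B : Mat n) (x y : Vec n) :
    mv A x - mv B y = mv A (x - y) + mv (A - B) y := by
  ext i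
  simp only [PiLp.add_apply, PiLp.sub_apply, mv_apply, mul_sub, sub_mul,
    Finset.sum_sub_distrib]
  ring

lemma norm_mv_le (A : Mat n) (x : Vec n) : ‖mv A x‖ ≤ ‖A‖ * ‖x‖ := by
  rw [← Real.sqrt_sq (by positivity : 0 ≤ ‖A‖ * ‖x‖), EuclideanSpace.norm_eq]
  apply Real.sqrt_le_sqrt
  rw [mul_pow, EuclideanSpace.norm_eq, EuclideanSpace.norm_eq, Real.sq_sqrt (by positivity),
    Real.sq_sqrt (by positivity), Fintype.sum_prod_type, Finset.sum_mul]
  gcongr with i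
  simpa only [mv_apply, Real.norm_eq_abs, sq_abs] using
    Finset.sum_mul_sq_le_sq_mul_sq _ (fun j => A (i, j)) (fun j => x j)

lemma continuous_mv : Continuous (fun p : Mat n × Vec n => mv p.1 p.2) := by
  refine (PiLp.continuous_toLp 2 _).comp (continuous_pi fun i => ?_)
  exact continuous_finsetSum _ fun j _ =>
    ((continuous_apply (i, j)).comp ((PiLp.continuous_ofLp 2 _).comp continuous_fst)).mul
      ((continuous_apply j).comp ((PiLp.continuous_ofLp 2 _).comp continuous_snd))

end MatVec

section MildSolution

variable {n : ℕ} {γ T L M : ℝ} {y₀ : Vec n} {f : Vec n → Vec n} {a : ℝ → Mat n} {ℓ y : ℝ → Vec n}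

lemma continuous_of_norm_sub_le (hf : ∀ z₁ z₂ : Vec n, ‖f z₁ - f z₂‖ ≤ L * ‖z₁ - z₂‖) :
    Continuous f :=
  (LipschitzWith.of_dist_le' fun z₁ z₂ => by simpa only [dist_eq_norm] using hf z₁ z₂).continuous

lemma norm_comp_mv_add_le (hf : ∀ z₁ z₂ : Vec n, ‖f z₁ - f z₂‖ ≤ L * ‖z₁ - z₂‖) (hL : 0 ≤ L)
    {A : Mat n} {x v : Vec n} (hA : ‖A‖ ≤ M) (hv : ‖v‖ ≤ M) :
    ‖f (mv A x + v)‖ ≤ (‖f 0‖ + L * M) + L * M * ‖x‖ := by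
  have hfz := hf (mv A x + v) 0
  rw [sub_zero] at hfz
  calc ‖f (mv A x + v)‖ ≤ ‖f 0‖ + L * ‖mv A x + v‖ := by
        linarith [norm_sub_norm_le (f (mv A x + v)) (f 0)]
    _ ≤ ‖f 0‖ + L * (‖A‖ * ‖x‖ + ‖v‖) := by
        gcongr
        exact (norm_add_le _ _).trans (add_le_add_left (norm_mv_le A x) _)
    _ ≤ (‖f 0‖ + L * M) + L * M * ‖x‖ := by
        nlinarith [mul_le_mul_of_nonneg_right hA (norm_nonneg x)]

lemma norm_comp_mv_add_sub_le (hf : ∀ z₁ z₂ : Vec n, ‖f z₁ - f z₂‖ ≤ L * ‖z₁ - z₂‖)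
    (hL : 0 ≤ L) {A₁ A₂ : Mat n} {x₁ x₂ v₁ v₂ : Vec n} {Ca Cl B : ℝ} (hA₁ : ‖A₁‖ ≤ M)
    (hA : ‖A₁ - A₂‖ ≤ Ca) (hv : ‖v₁ - v₂‖ ≤ Cl) (hx₂ : ‖x₂‖ ≤ B) :
    ‖f (mv A₁ x₁ + v₁) - f (mv A₂ x₂ + v₂)‖ ≤ L * (Ca * B + Cl) + L * M * ‖x₁ - x₂‖ := by
  have hdecomp : mv A₁ x₁ + v₁ - (mv A₂ x₂ + v₂)
      = mv A₁ (x₁ - x₂) + mv (A₁ - A₂) x₂ + (v₁ - v₂) := by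
    rw [← mv_sub_mv]
    abel
  have hmv : ‖mv (A₁ - A₂) x₂‖ ≤ Ca * B :=
    (norm_mv_le _ _).trans (mul_le_mul hA hx₂ (norm_nonneg _) ((norm_nonneg _).trans hA))
  calc ‖f (mv A₁ x₁ + v₁) - f (mv A₂ x₂ + v₂)‖
      ≤ L * (‖mv A₁ (x₁ - x₂)‖ + ‖mv (A₁ - A₂) x₂‖ + ‖v₁ - v₂‖) := by
        refine (hf _ _).trans ?_
        rw [hdecomp]
        gcongr
        exact norm_add₃_le
    _ ≤ L * (‖A₁‖ * ‖x₁ - x₂‖ + Ca * B + Cl) := by gcongr; exact norm_mv_le _ _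
    _ ≤ L * (Ca * B + Cl) + L * M * ‖x₁ - x₂‖ := by
        nlinarith [mul_le_mul_of_nonneg_right hA₁ (norm_nonneg (x₁ - x₂))]

theorem IsMildSolution.norm_le (hγ : 0 < γ) (hL : 0 ≤ L) (hM : 0 ≤ M) {r : ℝ} (hr : 0 < r)
    (hLMr : 2 * (L * M) ≤ r ^ γ) (hf : ∀ z₁ z₂ : Vec n, ‖f z₁ - f z₂‖ ≤ L * ‖z₁ - z₂‖)
    (haℓ : ∀ t ∈ Icc 0 T, ‖a t‖ ≤ M ∧ ‖ℓ t‖ ≤ M) (hy : IsMildSolution γ T y₀ f a ℓ y) :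
    ∀ t ∈ Icc 0 T, ‖y t‖
      ≤ 2 * (‖y₀‖ + (‖f 0‖ + L * M) / Real.Gamma γ * T ^ γ / γ) * Real.exp (r * T) := by
  have hΓ := Real.Gamma_pos_of_pos hγ
  refine singular_gronwall_affine hγ (norm_nonneg y₀) (B := (‖f 0‖ + L * M) / Real.Gamma γ)
    (C := L * M / Real.Gamma γ) (by positivity) (by positivity) hr
    (by rwa [mul_assoc, div_mul_cancel₀ _ hΓ.ne']) hy.1.norm fun t ht => ?_
  rw [hy.2 t ht]
  refine (norm_add_le _ _).trans (add_le_add le_rfl (norm_integral_sub_rpow_div_smul_le hγ ht.1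
    (hy.1.norm.mono (Icc_subset_Icc_right ht.2)) fun s hs => ?_))
  have hsT : s ∈ Icc 0 T := ⟨hs.1.le, hs.2.trans ht.2⟩
  exact norm_comp_mv_add_le hf hL (haℓ s hsT).1 (haℓ s hsT).2

lemma IsMildSolution.intervalIntegrable_integrand (hγ : 0 < γ) (hL : 0 ≤ L)
    (hf : ∀ z₁ z₂ : Vec n, ‖f z₁ - f z₂‖ ≤ L * ‖z₁ - z₂‖) (ha : Measurable a) (hℓ : Measurable ℓ)
    (haℓ : ∀ t ∈ Icc 0 T, ‖a t‖ ≤ M ∧ ‖ℓ t‖ ≤ M) (hy : IsMildSolution γ T y₀ f a ℓ y) {t : ℝ}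
    (ht : t ∈ Icc 0 T) :
    IntervalIntegrable (fun s => ((t - s) ^ (γ - 1) / Real.Gamma γ) • f (mv (a s) (y s) + ℓ s))
      volume 0 t := by
  have hyt : ContinuousOn y (Icc 0 t) := hy.1.mono (Icc_subset_Icc_right ht.2)
  have hym : AEStronglyMeasurable y (volume.restrict (Ioc 0 t)) :=
    (hyt.mono Ioc_subset_Icc_self).aestronglyMeasurable measurableSet_Ioc
  refine intervalIntegrable_sub_rpow_div_smul hγ ht.1
    ((continuous_of_norm_sub_le hf).comp_aestronglyMeasurable
      ((continuous_mv.comp_aestronglyMeasurable (ha.aestronglyMeasurable.prodMk hym)).add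
        hℓ.aestronglyMeasurable))
    (ψ := fun s => (‖f 0‖ + L * M) + L * M * ‖y s‖) (by fun_prop) fun s hs => ?_
  have hsT : s ∈ Icc 0 T := ⟨hs.1.le, hs.2.trans ht.2⟩
  exact norm_comp_mv_add_le hf hL (haℓ s hsT).1 (haℓ s hsT).2

theorem IsMildSolution.norm_sub_le (hγ : 0 < γ) (hL : 0 ≤ L) (hM : 0 ≤ M) {r : ℝ} (hr : 0 < r)
    (hLMr : 2 * (L * M) ≤ r ^ γ) (hf : ∀ z₁ z₂ : Vec n, ‖f z₁ - f z₂‖ ≤ L * ‖z₁ - z₂‖)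
    {a₁ a₂ : ℝ → Mat n} {ℓ₁ ℓ₂ y₁ y₂ : ℝ → Vec n} (ha₁ : Measurable a₁) (ha₂ : Measurable a₂)
    (hℓ₁ : Measurable ℓ₁) (hℓ₂ : Measurable ℓ₂) (hM₁ : ∀ t ∈ Icc 0 T, ‖a₁ t‖ ≤ M ∧ ‖ℓ₁ t‖ ≤ M)
    (hM₂ : ∀ t ∈ Icc 0 T, ‖a₂ t‖ ≤ M ∧ ‖ℓ₂ t‖ ≤ M) (hy₁ : IsMildSolution γ T y₀ f a₁ ℓ₁ y₁)
    (hy₂ : IsMildSolution γ T y₀ f a₂ ℓ₂ y₂) {Ca Cl B : ℝ}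
    (hCa : ∀ t ∈ Icc 0 T, ‖a₁ t - a₂ t‖ ≤ Ca) (hCl : ∀ t ∈ Icc 0 T, ‖ℓ₁ t - ℓ₂ t‖ ≤ Cl)
    (hB : ∀ t ∈ Icc 0 T, ‖y₂ t‖ ≤ B) :
    ∀ t ∈ Icc 0 T, ‖y₁ t - y₂ t‖
      ≤ 2 * (L * (Ca * B + Cl) / Real.Gamma γ * T ^ γ / γ) * Real.exp (r * T) := by
  intro t ht
  have hΓ := Real.Gamma_pos_of_pos hγ
  have h0 : (0:ℝ) ∈ Icc 0 T := ⟨le_rfl, ht.1.trans ht.2⟩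
  have hCa0 : 0 ≤ Ca := (norm_nonneg _).trans (hCa 0 h0)
  have hCl0 : 0 ≤ Cl := (norm_nonneg _).trans (hCl 0 h0)
  have hB0 : 0 ≤ B := (norm_nonneg _).trans (hB 0 h0)
  have := singular_gronwall_affine hγ le_rfl (B := L * (Ca * B + Cl) / Real.Gamma γ)
    (C := L * M / Real.Gamma γ) (by positivity) (by positivity) hr
    (by rwa [mul_assoc, div_mul_cancel₀ _ hΓ.ne']) (φ := fun s => ‖y₁ s - y₂ s‖)
    (hy₁.1.sub hy₂.1).norm (fun t ht => ?_) t ht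
  · simpa only [zero_add] using this
  rw [hy₁.2 t ht, hy₂.2 t ht, add_sub_add_left_eq_sub, zero_add,
    ← intervalIntegral.integral_sub (hy₁.intervalIntegrable_integrand hγ hL hf ha₁ hℓ₁ hM₁ ht)
      (hy₂.intervalIntegrable_integrand hγ hL hf ha₂ hℓ₂ hM₂ ht)]
  simp_rw [← smul_sub]
  refine norm_integral_sub_rpow_div_smul_le hγ ht.1 (φ := fun s => ‖y₁ s - y₂ s‖)
    ((hy₁.1.sub hy₂.1).norm.mono (Icc_subset_Icc_right ht.2)) fun s hs => ?_
  have hsT : s ∈ Icc 0 T := ⟨hs.1.le, hs.2.trans ht.2⟩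
  exact norm_comp_mv_add_sub_le hf hL (hM₁ s hsT).1 (hCa s hsT) (hCl s hsT) (hB s hsT)

end MildSolution

/-- The solution operator `S : L^∞(0,T;ℝ^{n×n}×ℝⁿ) → C([0,T];ℝⁿ)` of the
state equation is locally Lipschitz continuous: for every `M > 0` there is `L_M > 0` such
that `‖S(a₁,ℓ₁) - S(a₂,ℓ₂)‖_{C([0,T];ℝⁿ)} ≤ L_M (‖a₁-a₂‖_{L^∞} + ‖ℓ₁-ℓ₂‖_{L^∞})` whenever
`‖(aₖ,ℓₖ)‖_{L^∞} ≤ M`, `k = 1,2`.  (The `L^∞`-norms of the differences are encoded through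
arbitrary uniform bounds `Ca`, `Cl` on `[0,T]`.) -/
theorem stmt_4 {n : ℕ} (γ T L : ℝ) (hγ : γ ∈ Ioo (0:ℝ) 1) (hT : 0 < T) (hL : 0 < L)
    (y₀ : Vec n) (f : Vec n → Vec n)
    (hf : ∀ z₁ z₂ : Vec n, ‖f z₁ - f z₂‖ ≤ L * ‖z₁ - z₂‖) :
    ∀ M > (0:ℝ), ∃ LM : ℝ, 0 < LM ∧
      ∀ a₁ a₂ : ℝ → Mat n, ∀ ℓ₁ ℓ₂ : ℝ → Vec n,
        Measurable a₁ → Measurable a₂ → Measurable ℓ₁ → Measurable ℓ₂ →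
        (∀ t ∈ Icc (0:ℝ) T, ‖a₁ t‖ ≤ M ∧ ‖ℓ₁ t‖ ≤ M) →
        (∀ t ∈ Icc (0:ℝ) T, ‖a₂ t‖ ≤ M ∧ ‖ℓ₂ t‖ ≤ M) →
        ∀ y₁ y₂ : ℝ → Vec n,
          IsMildSolution γ T y₀ f a₁ ℓ₁ y₁ → IsMildSolution γ T y₀ f a₂ ℓ₂ y₂ →
          ∀ Ca Cl : ℝ,
            (∀ t ∈ Icc (0:ℝ) T, ‖a₁ t - a₂ t‖ ≤ Ca) →
            (∀ t ∈ Icc (0:ℝ) T, ‖ℓ₁ t - ℓ₂ t‖ ≤ Cl) →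
            ∀ t ∈ Icc (0:ℝ) T, ‖y₁ t - y₂ t‖ ≤ LM * (Ca + Cl) := by
  intro M hM
  obtain ⟨hγ0, -⟩ := hγ
  set r := (2 * (L * M) + 1) ^ γ⁻¹ with hr_def
  have hr : 0 < r := by positivity
  have hLMr : 2 * (L * M) ≤ r ^ γ := by
    rw [hr_def, Real.rpow_inv_rpow (by positivity) hγ0.ne']
    linarith
  set B := 2 * (‖y₀‖ + (‖f 0‖ + L * M) / Real.Gamma γ * T ^ γ / γ) * Real.exp (r * T)
  set K := 2 * (L / Real.Gamma γ * T ^ γ / γ) * Real.exp (r * T)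
  refine ⟨K * (B + 1), by positivity, ?_⟩
  intro a₁ a₂ ℓ₁ ℓ₂ ha₁ ha₂ hℓ₁ hℓ₂ hM₁ hM₂ y₁ y₂ hy₁ hy₂ Ca Cl hCa hCl t ht
  have h0 : (0:ℝ) ∈ Icc 0 T := ⟨le_rfl, hT.le⟩
  have hCa0 : 0 ≤ Ca := (norm_nonneg _).trans (hCa 0 h0)
  have hCl0 : 0 ≤ Cl := (norm_nonneg _).trans (hCl 0 h0)
  have hB : ∀ t ∈ Icc 0 T, ‖y₂ t‖ ≤ B := hy₂.norm_le hγ0 hL.le hM.le hr hLMr hf hM₂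
  calc ‖y₁ t - y₂ t‖
      ≤ 2 * (L * (Ca * B + Cl) / Real.Gamma γ * T ^ γ / γ) * Real.exp (r * T) :=
        hy₁.norm_sub_le hγ0 hL.le hM.le hr hLMr hf ha₁ ha₂ hℓ₁ hℓ₂ hM₁ hM₂ hy₂ hCa hCl hB t ht
    _ = K * (Ca * B + Cl) := by ring
    _ ≤ K * ((B + 1) * (Ca + Cl)) := by
        gcongr
        nlinarith [(norm_nonneg _).trans (hB 0 h0)]
    _ = K * (B + 1) * (Ca + Cl) := by ring
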